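/- Let f = f_h : ℂ^k → ℂ^k be a homogeneous regular polynomial endomorphism of degree d, inducing f_Π : ℙ^{k−1} → ℙ^{k−1} by f_Π[z] = [f(z)]. Then for every z ∈ ℂ^k \ {0} with z not a critical point of f_Π's lift, |det Df(z)| = d · (|f(z)|/|z|)^k · |det Df_Π([z])|, where the Jacobian of f is taken in the Euclidean metric on ℂ^k and the Jacobian of f_Π in the Fubini–Study metric on ℙ^{k−1}. -/

import Mathlib

open Filter

/-- Evaluation of a `k`-tuple of polynomials in `k` variables as a self-map of `ℂ^k`. -/
noncomputable def evalMap {k : ℕ} (F : Fin k → MvPolynomial (Fin k) ℂ)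
    (z : EuclideanSpace ℂ (Fin k)) : EuclideanSpace ℂ (Fin k) :=
  (WithLp.equiv 2 (Fin k → ℂ)).symm fun i =>
    MvPolynomial.eval ((WithLp.equiv 2 (Fin k → ℂ)) z) (F i)

/-! Euler's identity `Df(z) z = d • f(z)` says that `Df(z)` maps the line `ℂ z` into `ℂ f(z)`.
So in orthonormal frames adapted to `ℂ z ⊕ z^⊥` and `ℂ f(z) ⊕ f(z)^⊥` the matrix of `Df(z)` is
block upper triangular, with corner `d |f(z)| / |z|` and, as lower-right block, `Df(z)` followed
by the orthogonal projection onto `f(z)^⊥`, whose absolute determinant is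
`(|f(z)| / |z|)^{k-1} · Jpi`. -/

open scoped InnerProductSpace

theorem MvPolynomial.IsHomogeneous.eval_smul {R σ : Type*} [CommSemiring R]
    {p : MvPolynomial σ R} {n : ℕ} (hp : p.IsHomogeneous n) (c : R) (x : σ → R) :
    eval (c • x) p = c ^ n * eval x p := by
  rw [eval_eq, eval_eq, Finset.mul_sum]
  refine Finset.sum_congr rfl fun m hm => ?_
  have hdeg : ∑ i ∈ m.support, m i = n := by
    rw [← Finsupp.degree_apply, Finsupp.degree_eq_weight_one]
    exact hp (mem_support_iff.mp hm)
  simp only [Pi.smul_apply, smul_eq_mul, mul_pow, Finset.prod_mul_distrib,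
    Finset.prod_pow_eq_pow_sum, hdeg]
  ring

theorem differentiable_evalMap {k : ℕ} (F : Fin k → MvPolynomial (Fin k) ℂ) :
    Differentiable ℂ (evalMap F) :=
  differentiable_euclidean.2 fun i z =>
    (AnalyticOnNhd.eval_continuousLinearMap
      (EuclideanSpace.equiv (Fin k) ℂ).toContinuousLinearMap (F i) z trivial).differentiableAt

theorem evalMap_smul {k d : ℕ} {F : Fin k → MvPolynomial (Fin k) ℂ}
    (hF : ∀ i, (F i).IsHomogeneous d) (c : ℂ) (z : EuclideanSpace ℂ (Fin k)) :
    evalMap F (c • z) = c ^ d • evalMap F z := by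
  ext i
  simp [evalMap, (hF i).eval_smul]

theorem fderiv_apply_self_of_map_smul {𝕜 E F : Type*} [NontriviallyNormedField 𝕜]
    [NormedAddCommGroup E] [NormedSpace 𝕜 E] [NormedAddCommGroup F] [NormedSpace 𝕜 F]
    {f : E → F} {x : E} {n : ℕ} (hf : DifferentiableAt 𝕜 f x)
    (hhom : ∀ c : 𝕜, f (c • x) = c ^ n • f x) :
    fderiv 𝕜 f x x = (n : 𝕜) • f x := by
  have hline : HasDerivAt (fun t : 𝕜 => t • x) x 1 := by
    simpa using (hasDerivAt_id (1 : 𝕜)).smul_const x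
  have hf₁ : HasFDerivAt f (fderiv 𝕜 f x) ((1 : 𝕜) • x) := by
    rw [one_smul]
    exact hf.hasFDerivAt
  have h₁ : HasDerivAt (fun t : 𝕜 => f (t • x)) (fderiv 𝕜 f x x) 1 :=
    hf₁.comp_hasDerivAt 1 hline
  have h₂ : HasDerivAt (fun t : 𝕜 => f (t • x)) ((n : 𝕜) • f x) 1 := by
    simpa [hhom] using (hasDerivAt_pow n (1 : 𝕜)).smul_const (f x)
  exact h₁.unique h₂

section LinearAlgebra

variable {𝕜 E : Type*} [RCLike 𝕜] [NormedAddCommGroup E] [InnerProductSpace 𝕜 E]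

theorem Orthonormal.sumElim {ι₁ ι₂ : Type*} {f : ι₁ → E} {g : ι₂ → E}
    (hf : Orthonormal 𝕜 f) (hg : Orthonormal 𝕜 g) (hfg : ∀ i j, ⟪f i, g j⟫_𝕜 = 0) :
    Orthonormal 𝕜 (Sum.elim f g) := by
  refine ⟨Sum.rec hf.1 hg.1, ?_⟩
  rintro (i | i) (j | j) hij
  · exact hf.2 (ne_of_apply_ne Sum.inl hij)
  · exact hfg i j
  · exact inner_eq_zero_symm.1 (hfg j i)
  · exact hg.2 (ne_of_apply_ne Sum.inr hij)

theorem orthonormal_const_inv_norm_smul {ι : Type*} [Subsingleton ι] {v : E} (hv : v ≠ 0) :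
    Orthonormal 𝕜 (fun _ : ι => (‖v‖ : 𝕜)⁻¹ • v) :=
  ⟨fun _ => norm_smul_inv_norm hv, Subsingleton.pairwise⟩

theorem LinearMap.toMatrix_orthonormalBasis_apply {F ι ι' : Type*} [NormedAddCommGroup F]
    [InnerProductSpace 𝕜 F] [Fintype ι] [DecidableEq ι] [Fintype ι']
    (b : OrthonormalBasis ι 𝕜 E) (b' : OrthonormalBasis ι' 𝕜 F) (f : E →ₗ[𝕜] F) (i : ι') (j : ι) :
    LinearMap.toMatrix b.toBasis b'.toBasis f i j = ⟪b' i, f (b j)⟫_𝕜 := by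
  rw [LinearMap.toMatrix_apply, OrthonormalBasis.coe_toBasis,
    OrthonormalBasis.coe_toBasis_repr_apply, OrthonormalBasis.repr_apply_apply]

variable [FiniteDimensional 𝕜 E] {ι : Type*} [Fintype ι]

noncomputable def OrthonormalBasis.ofOrthogonalSpanSingleton {v : E} (hv : v ≠ 0)
    (B : OrthonormalBasis ι 𝕜 (𝕜 ∙ v)ᗮ) : OrthonormalBasis (Unit ⊕ ι) 𝕜 E :=
  have hon : Orthonormal 𝕜 (Sum.elim (fun _ => (‖v‖ : 𝕜)⁻¹ • v) fun i => (B i : E)) :=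
    (orthonormal_const_inv_norm_smul hv).sumElim
      (B.orthonormal.comp_linearIsometry (𝕜 ∙ v)ᗮ.subtypeₗᵢ) fun _ i => by
        rw [inner_smul_left, Submodule.inner_right_of_mem_orthogonal
          (Submodule.mem_span_singleton_self v) (B i).2, mul_zero]
  have hcard : Fintype.card (Unit ⊕ ι) = Module.finrank 𝕜 E := by
    rw [Fintype.card_sum, Fintype.card_unit, ← finrank_span_singleton (K := 𝕜) hv,
      ← Module.finrank_eq_card_basis B.toBasis, Submodule.finrank_add_finrank_orthogonal]
  (basisOfOrthonormalOfCardEqFinrank hon hcard).toOrthonormalBasis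
    (by rwa [coe_basisOfOrthonormalOfCardEqFinrank])

theorem OrthonormalBasis.coe_ofOrthogonalSpanSingleton {v : E} (hv : v ≠ 0)
    (B : OrthonormalBasis ι 𝕜 (𝕜 ∙ v)ᗮ) :
    ⇑(ofOrthogonalSpanSingleton hv B) =
      Sum.elim (fun _ => (‖v‖ : 𝕜)⁻¹ • v) fun i => (B i : E) := by
  rw [ofOrthogonalSpanSingleton, Module.Basis.coe_toOrthonormalBasis,
    coe_basisOfOrthonormalOfCardEqFinrank]

open Module OrthonormalBasis in
theorem LinearMap.det_toMatrix_ofOrthogonalSpanSingleton [DecidableEq ι] (A : E →ₗ[𝕜] E)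
    {z w : E} (hz : z ≠ 0) (hw : w ≠ 0) {c : 𝕜} (hA : A z = c • w)
    (B₁ : OrthonormalBasis ι 𝕜 (𝕜 ∙ z)ᗮ) (B₂ : OrthonormalBasis ι 𝕜 (𝕜 ∙ w)ᗮ) :
    (toMatrix (ofOrthogonalSpanSingleton hz B₁).toBasis
        (ofOrthogonalSpanSingleton hw B₂).toBasis A).det =
      c * ((‖w‖ / ‖z‖ : ℝ) : 𝕜) * (toMatrix B₁.toBasis B₂.toBasis
        (((𝕜 ∙ w)ᗮ.orthogonalProjectionOnto.toLinearMap ∘ₗ A) ∘ₗ (𝕜 ∙ z)ᗮ.subtype)).det := by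
  set N := toMatrix (ofOrthogonalSpanSingleton hz B₁).toBasis
    (ofOrthogonalSpanSingleton hw B₂).toBasis A
  have hN : ∀ i j, N i j = ⟪ofOrthogonalSpanSingleton hw B₂ i,
      A (ofOrthogonalSpanSingleton hz B₁ j)⟫_𝕜 :=
    toMatrix_orthonormalBasis_apply _ _ A
  have h₁₁ : N (.inl ()) (.inl ()) = c * ((‖w‖ / ‖z‖ : ℝ) : 𝕜) := by
    rw [hN]
    simp only [coe_ofOrthogonalSpanSingleton, Sum.elim_inl, map_smul, hA, inner_smul_right,
      inner_smul_left, map_inv₀, RCLike.conj_ofReal, inner_self_eq_norm_sq_to_K, map_div₀]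
    have hz' : (‖z‖ : 𝕜) ≠ 0 := by simpa using hz
    have hw' : (‖w‖ : 𝕜) ≠ 0 := by simpa using hw
    field_simp
  have h₂₁ : N.toBlocks₂₁ = 0 := by
    ext i j
    change N (.inr i) (.inl j) = 0
    rw [hN]
    simp [coe_ofOrthogonalSpanSingleton, hA, inner_smul_right,
      Submodule.inner_left_of_mem_orthogonal (Submodule.mem_span_singleton_self w) (B₂ i).2]
  have h₂₂ : N.toBlocks₂₂ = toMatrix B₁.toBasis B₂.toBasis
      (((𝕜 ∙ w)ᗮ.orthogonalProjectionOnto.toLinearMap ∘ₗ A) ∘ₗ (𝕜 ∙ z)ᗮ.subtype) := by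
    ext i j
    change N (.inr i) (.inr j) = _
    rw [hN, toMatrix_orthonormalBasis_apply]
    simp [coe_ofOrthogonalSpanSingleton]
  rw [← N.fromBlocks_toBlocks, h₂₁, Matrix.det_fromBlocks_zero₂₁, Matrix.det_unique, h₂₂, ← h₁₁]
  rfl

open Module OrthonormalBasis in
theorem LinearMap.norm_det_eq_mul_normDet_of_apply_eq_smul (A : E →ₗ[𝕜] E) {z w : E}
    (hz : z ≠ 0) (hw : w ≠ 0) {c : 𝕜} (hA : A z = c • w) :
    ‖A.det‖ = ‖c‖ * (‖w‖ / ‖z‖) *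
      (((𝕜 ∙ w)ᗮ.orthogonalProjectionOnto.toLinearMap ∘ₗ A) ∘ₗ (𝕜 ∙ z)ᗮ.subtype).normDet := by
  have hrank : finrank 𝕜 (𝕜 ∙ w)ᗮ = finrank 𝕜 (𝕜 ∙ z)ᗮ := by
    have hz' := (𝕜 ∙ z).finrank_add_finrank_orthogonal
    have hw' := (𝕜 ∙ w).finrank_add_finrank_orthogonal
    rw [finrank_span_singleton hz] at hz'
    rw [finrank_span_singleton hw] at hw'
    omega
  let B₁ := stdOrthonormalBasis 𝕜 (𝕜 ∙ z)ᗮ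
  let B₂ := (stdOrthonormalBasis 𝕜 (𝕜 ∙ w)ᗮ).reindex (finCongr hrank)
  rw [← normDet_eq_norm_det, normDet_eq_norm_det_toMatrix A (ofOrthogonalSpanSingleton hz B₁)
      (ofOrthogonalSpanSingleton hw B₂), det_toMatrix_ofOrthogonalSpanSingleton A hz hw hA,
    normDet_eq_norm_det_toMatrix _ B₁ B₂, norm_mul, norm_mul, RCLike.norm_ofReal,
    abs_of_nonneg (by positivity)]

end LinearAlgebra

/-- `Jpi` is `|det Df_Π([z])|`, the Fubini–Study Jacobian of `f_Π` at `[z]`, computed on the lift: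
`(|z|/|f z|)^{k-1}` times the absolute determinant (in orthonormal bases) of the map
`z^⊥ → (f z)^⊥` given by `Df(z)` followed by orthogonal projection. -/
theorem homogeneous_jacobian_formula_general {k d : ℕ}
    (F : Fin k → MvPolynomial (Fin k) ℂ)
    (hhom : ∀ i, (F i).IsHomogeneous d)
    (hzero : ∀ z : EuclideanSpace ℂ (Fin k), evalMap F z = 0 → z = 0)
    (z : EuclideanSpace ℂ (Fin k)) (hz : z ≠ 0)
    (Jpi : ℝ)
    (hJ : ∃ (B₁ : OrthonormalBasis (Fin (k - 1)) ℂ ↥((ℂ ∙ z)ᗮ))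
        (B₂ : OrthonormalBasis (Fin (k - 1)) ℂ ↥((ℂ ∙ (evalMap F z))ᗮ)),
      Jpi = (‖z‖ / ‖evalMap F z‖) ^ (k - 1) *
        ‖(Matrix.det
            (LinearMap.toMatrix B₁.toBasis B₂.toBasis
              (((Submodule.orthogonalProjectionOnto ((ℂ ∙ (evalMap F z))ᗮ)).toLinearMap.comp
                  ((fderiv ℂ (evalMap F) z).toLinearMap)).comp
                ((ℂ ∙ z)ᗮ.subtype))))‖) :
    ‖(LinearMap.det ((fderiv ℂ (evalMap F) z :
        EuclideanSpace ℂ (Fin k) →ₗ[ℂ] EuclideanSpace ℂ (Fin k))))‖ =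
      d * (‖evalMap F z‖ / ‖z‖) ^ k * Jpi := by
  obtain ⟨B₁, B₂, rfl⟩ := hJ
  have hw : evalMap F z ≠ 0 := fun h => hz (hzero z h)
  have heuler : fderiv ℂ (evalMap F) z z = (d : ℂ) • evalMap F z :=
    fderiv_apply_self_of_map_smul (differentiable_evalMap F z) fun c => evalMap_smul hhom c z
  have hk : k ≠ 0 := by
    rintro rfl
    exact hz (Subsingleton.elim _ _)
  have hpow : (‖evalMap F z‖ / ‖z‖) ^ k * (‖z‖ / ‖evalMap F z‖) ^ (k - 1) =
      ‖evalMap F z‖ / ‖z‖ := by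
    obtain ⟨m, rfl⟩ := Nat.exists_eq_succ_of_ne_zero hk
    rw [Nat.succ_sub_one, pow_succ, mul_right_comm, ← mul_pow, div_mul_div_comm,
      mul_comm ‖evalMap F z‖, div_self (by positivity), one_pow, one_mul]
  rw [← LinearMap.normDet_eq_norm_det_toMatrix,
    LinearMap.norm_det_eq_mul_normDet_of_apply_eq_smul _ hz hw heuler, Complex.norm_natCast,
    ← mul_assoc, mul_assoc (d : ℝ) (_ ^ k), hpow]

/-- For a homogeneous regular polynomial endomorphism `f = f_h` of `ℂ^k` of degree `d`,
inducing `f_Π` on `ℙ^{k-1}`, one has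
`|det Df(z)| = d · (|f(z)|/|z|)^k · |det Df_Π([z])|` at every noncritical point.
Here `|det Df_Π([z])|`, the Jacobian of `f_Π` at `[z]` in the Fubini–Study metric, is
expressed through the lift: it equals `(|z|/|f z|)^{k-1}` times the absolute determinant
(computed in orthonormal bases) of the map `z^⊥ → (f z)^⊥` given by `Df(z)` followed by
orthogonal projection. -/
theorem homogeneous_jacobian_formula {k d : ℕ} (hk : 1 ≤ k) (hd : 2 ≤ d)
    (F : Fin k → MvPolynomial (Fin k) ℂ)
    (hhom : ∀ i, (F i).IsHomogeneous d)
    (hzero : ∀ z : EuclideanSpace ℂ (Fin k), evalMap F z = 0 → z = 0)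
    (z : EuclideanSpace ℂ (Fin k)) (hz : z ≠ 0)
    (Jpi : ℝ)
    (hJ : ∃ (B₁ : OrthonormalBasis (Fin (k - 1)) ℂ ↥((ℂ ∙ z)ᗮ))
        (B₂ : OrthonormalBasis (Fin (k - 1)) ℂ ↥((ℂ ∙ (evalMap F z))ᗮ)),
      Jpi = (‖z‖ / ‖evalMap F z‖) ^ (k - 1) *
        ‖(Matrix.det
            (LinearMap.toMatrix B₁.toBasis B₂.toBasis
              (((Submodule.orthogonalProjectionOnto ((ℂ ∙ (evalMap F z))ᗮ)).toLinearMap.comp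
                  ((fderiv ℂ (evalMap F) z).toLinearMap)).comp
                ((ℂ ∙ z)ᗮ.subtype))))‖)
    -- `[z]` is not a critical point of `f_Π`
    (hcrit : Jpi ≠ 0) :
    ‖(LinearMap.det ((fderiv ℂ (evalMap F) z :
        EuclideanSpace ℂ (Fin k) →ₗ[ℂ] EuclideanSpace ℂ (Fin k))))‖ =
      d * (‖evalMap F z‖ / ‖z‖) ^ k * Jpi :=
  homogeneous_jacobian_formula_general F hhom hzero z hz Jpi hJ
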